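/- arXiv:2005.09716 — 4 statements merged into one kernel-verified Lean document; each statement's English description precedes it below -/
import Mathlib

section
/- If a connected graph X has symmetric growth, then X has finite maximum degree; i.e., sup over x of deg(x) is finite. -/
private lemma ball_finite {V : Type*} (G : SimpleGraph V) (hconn : G.Connected)
    (hlf : G.LocallyFinite) (r : ℕ) (x : V) : {z : V | G.dist x z ≤ r}.Finite := by
  induction r with
  | zero =>
    have : {z : V | G.dist x z ≤ 0} = {x} := by
      ext z
      simp [Nat.le_zero, hconn.dist_eq_zero_iff, eq_comm]
    rw [this]; exact Set.finite_singleton x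
  | succ r ih =>
    have hsub : {z : V | G.dist x z ≤ r + 1} ⊆
        ⋃ w ∈ {z : V | G.dist x z ≤ r}, ({w} ∪ G.neighborSet w : Set V) := by
      intro z hz
      simp only [Set.mem_setOf_eq] at hz
      rcases le_or_gt (G.dist x z) r with h | h
      · exact Set.mem_biUnion h (Set.mem_union_left _ rfl)
      · have hd : G.dist x z = r + 1 := le_antisymm hz h
        obtain ⟨p, hp⟩ := hconn.exists_walk_length_eq_dist z x
        rw [SimpleGraph.dist_comm, hd] at hp
        cases p with
        | nil => simp at hp
        | cons h' q' =>
          rename_i w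
          have hq' : q'.length = r := by simpa using hp
          have hw : G.dist x w ≤ r := by
            have := G.dist_le q'.reverse
            simpa [hq'] using this
          exact Set.mem_biUnion hw (Set.mem_union_right _ h'.symm)
    refine Set.Finite.subset ?_ hsub
    exact ih.biUnion fun w _ =>
      (Set.finite_singleton w).union (G.neighborSet w).toFinite

/-- If a connected graph has symmetric growth, then it has finite maximum degree. -/
theorem stmt_1 {V : Type*} (G : SimpleGraph V) (hconn : G.Connected)
    (hlf : G.LocallyFinite)
    (hsym : ∃ k l m : ℕ, ∀ x y : V, ∀ r : ℕ, m ≤ r →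
      {z : V | G.dist x z ≤ r}.ncard ≤ k * {z : V | G.dist y z ≤ l * r}.ncard) :
    ∃ Δ : ℕ, ∀ v : V, G.degree v ≤ Δ := by
  obtain ⟨k, l, m, hgrow⟩ := hsym
  have : Nonempty V := hconn.nonempty
  obtain ⟨y₀⟩ := this
  set r : ℕ := m + 1 with hr
  refine ⟨k * {z : V | G.dist y₀ z ≤ l * r}.ncard, fun v => ?_⟩
  have hfin : {z : V | G.dist v z ≤ r}.Finite := ball_finite G hconn hlf r v
  have h1 : (G.neighborFinset v : Set V) ⊆ {z : V | G.dist v z ≤ r} := by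
    intro z hz
    rw [Finset.mem_coe, SimpleGraph.mem_neighborFinset] at hz
    have : G.dist v z ≤ 1 := G.dist_le hz.toWalk
    exact le_trans this (by omega)
  have h2 : G.degree v ≤ {z : V | G.dist v z ≤ r}.ncard := by
    have := Set.ncard_le_ncard h1 hfin
    rwa [Set.ncard_coe_finset, SimpleGraph.card_neighborFinset_eq_degree] at this
  exact le_trans h2 (hgrow v y₀ r (by omega))
end

section
/- Let X be a connected locally finite graph, let R > 0, and let Y ⊆ X be a (2R+1)-separated, 2R-coarsely dense subset. Define a graph structure E_Y on Y by: y E_Y y' iff 0 < d_X(y,y') ≤ 4R+1. Then (Y, E_Y) is a connected graph, and each y ∈ Y has degree at most |D_X(y, 4R+1)| − 1 in (Y, E_Y). -/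
/-!
Cover a geodesic from `a` to `b` by the net `Y`: the point `r + 1` steps along it has a net
point `c` within `r`, so `c` is within `2r + 1` of `a` and strictly closer to `b` than `a` is.
Induction on the distance to `b` then connects `a` to `b` in the net graph. The degree bound
holds because the neighbours of `y` are distinct points of the finite ball around `y`, other
than `y` itself.
-/

namespace SimpleGraph

variable {V : Type*} {G : SimpleGraph V} {u v : V}

lemma Walk.dist_getVert_le_index (p : G.Walk u v) (k : ℕ) : G.dist u (p.getVert k) ≤ k :=
  (dist_le (p.take k)).trans (by simp [Walk.take_length])

lemma Walk.dist_getVert_le_length_sub (p : G.Walk u v) (k : ℕ) :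
    G.dist (p.getVert k) v ≤ p.length - k :=
  (dist_le (p.drop k)).trans_eq (p.drop_length k)

lemma Connected.finite_setOf_dist_le [G.LocallyFinite] (hconn : G.Connected) (y : V) (n : ℕ) :
    {z | G.dist y z ≤ n}.Finite := by
  induction n with
  | zero => simp [hconn.dist_eq_zero_iff]
  | succ n ih =>
    refine (ih.biUnion fun w _ ↦ ((G.neighborSet w).toFinite.insert w)).subset ?_
    intro z (hz : G.dist y z ≤ n + 1)
    simp only [Set.mem_iUnion, Set.mem_ofPred_eq, Set.mem_insert_iff, mem_neighborSet]
    rcases Nat.lt_or_ge n (G.dist y z) with hlt | hle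
    · obtain ⟨p, hp⟩ := (hconn y z).exists_walk_length_eq_dist
      refine ⟨p.getVert n, p.dist_getVert_le_index n, Or.inr ?_⟩
      simpa [p.getVert_of_length_le (show p.length ≤ n + 1 by omega)] using
        p.adj_getVert_succ (show n < p.length by omega)
    · exact ⟨z, hle, Or.inl rfl⟩

lemma Connected.exists_mem_dist_le_dist_lt (hconn : G.Connected) {Y : Set V} {r : ℕ}
    (hdense : ∀ x, ∃ y ∈ Y, G.dist x y ≤ r) {a b : V} (hab : r < G.dist a b) :
    ∃ c ∈ Y, G.dist a c ≤ 2 * r + 1 ∧ G.dist c b < G.dist a b := by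
  obtain ⟨p, hp⟩ := (hconn a b).exists_walk_length_eq_dist
  set x := p.getVert (r + 1)
  have hax : G.dist a x ≤ r + 1 := p.dist_getVert_le_index _
  have hxb : G.dist x b ≤ G.dist a b - (r + 1) := hp ▸ p.dist_getVert_le_length_sub _
  obtain ⟨c, hcY, hxc⟩ := hdense x
  have hcx : G.dist c x ≤ r := G.dist_comm ▸ hxc
  refine ⟨c, hcY, ?_, ?_⟩
  · have := hconn.dist_triangle (u := a) (v := x) (w := c)
    omega
  · have := hconn.dist_triangle (u := c) (v := x) (w := b)
    omega

theorem Connected.connected_of_dense {Y : Set V} {r : ℕ} (hconn : G.Connected)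
    (hdense : ∀ x, ∃ y ∈ Y, G.dist x y ≤ r) {H : SimpleGraph Y}
    (hadj : ∀ a b : Y, a ≠ b → G.dist a b ≤ 2 * r + 1 → H.Adj a b) : H.Connected := by
  have : Nonempty Y := by
    obtain ⟨x⟩ := hconn.nonempty
    obtain ⟨y, hy, -⟩ := hdense x
    exact ⟨⟨y, hy⟩⟩
  refine ⟨fun a b ↦ ?_⟩
  induction hn : G.dist a b using Nat.strong_induction_on generalizing a with
  | _ n ih =>
    by_cases hab : a = b
    · exact hab ▸ Reachable.refl a
    by_cases hclose : G.dist a b ≤ 2 * r + 1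
    · exact (hadj a b hab hclose).reachable
    obtain ⟨c, hcY, hac, hcb⟩ :=
      hconn.exists_mem_dist_le_dist_lt hdense (a := a) (b := b) (by omega)
    have hne : a ≠ ⟨c, hcY⟩ := by
      rintro rfl
      exact hcb.false
    exact (hadj _ _ hne hac).reachable.trans (ih _ (hn ▸ hcb) ⟨c, hcY⟩ rfl)

lemma ncard_neighborSet_le_ncard_sub_one {Y S : Set V} {H : SimpleGraph Y} {y : Y}
    (hS : S.Finite) (hy : (y : V) ∈ S) (hN : ∀ z, H.Adj y z → (z : V) ∈ S) :
    (H.neighborSet y).ncard ≤ S.ncard - 1 := by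
  have hsub : Subtype.val '' H.neighborSet y ⊆ S \ {(y : V)} := by
    rintro _ ⟨z, hz, rfl⟩
    exact ⟨hN z hz, fun h ↦ H.ne_of_adj hz (Subtype.ext h).symm⟩
  calc (H.neighborSet y).ncard
      = (Subtype.val '' H.neighborSet y).ncard :=
        (Set.ncard_image_of_injective _ Subtype.val_injective).symm
    _ ≤ (S \ {(y : V)}).ncard := Set.ncard_le_ncard hsub hS.sdiff
    _ = S.ncard - 1 := Set.ncard_sdiff_singleton_of_mem hy

end SimpleGraph

theorem stmt_5_general {V : Type*} (G : SimpleGraph V) (hconn : G.Connected)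
    (hlf : G.LocallyFinite) (R : ℕ) (Y : Set V)
    (hdense : ∀ x : V, ∃ y ∈ Y, G.dist x y ≤ 2 * R)
    (GY : SimpleGraph Y)
    (hGY : ∀ y y' : Y, GY.Adj y y' ↔ 0 < G.dist y y' ∧ G.dist y y' ≤ 4 * R + 1) :
    GY.Connected ∧ ∀ y : Y, (GY.neighborSet y).ncard ≤
      {z : V | G.dist (y : V) z ≤ 4 * R + 1}.ncard - 1 := by
  refine ⟨hconn.connected_of_dense hdense fun a b hab hd ↦ ?_, fun y ↦ ?_⟩
  · exact (hGY a b).2 ⟨hconn.pos_dist_of_ne (Subtype.coe_injective.ne hab), by omega⟩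
  · exact SimpleGraph.ncard_neighborSet_le_ncard_sub_one (hconn.finite_setOf_dist_le y _)
      (by simp) fun z hz ↦ ((hGY y z).1 hz).2

/-- If `Y` is a `(2R+1)`-separated, `2R`-coarsely dense subset of a connected locally
finite graph `X`, then the graph on `Y` with `y ~ y'` iff `0 < d(y,y') ≤ 4R+1` is
connected, and each vertex `y` has degree at most `|D_X(y,4R+1)| - 1`. -/
theorem stmt_5 {V : Type*} (G : SimpleGraph V) (hconn : G.Connected)
    (hlf : G.LocallyFinite) (R : ℕ) (hR : 0 < R) (Y : Set V)
    (hsep : ∀ y ∈ Y, ∀ y' ∈ Y, y ≠ y' → 2 * R + 1 ≤ G.dist y y')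
    (hdense : ∀ x : V, ∃ y ∈ Y, G.dist x y ≤ 2 * R)
    (GY : SimpleGraph Y)
    (hGY : ∀ y y' : Y, GY.Adj y y' ↔ 0 < G.dist y y' ∧ G.dist y y' ≤ 4 * R + 1) :
    GY.Connected ∧ ∀ y : Y, (GY.neighborSet y).ncard ≤
      {z : V | G.dist (y : V) z ≤ 4 * R + 1}.ncard - 1 :=
  stmt_5_general G hconn hlf R Y hdense GY hGY
end

section
/- Fix integers Δ > 2, R > 3, and Q > Δ² + R − 1. Consider tuples (a_1,…,a_R) of positive integers satisfying: a_1 ≤ Δ; a_i ≤ a_{i−1}(Δ−1) for i = 2,…,R; and a_1 + ⋯ + a_R = Q − 1. Then any minimizer of f(a) = ∏_{i=3}^R (a_i + 1) over this (finite, nonempty) constraint set satisfies a_1 = Δ and a_2 = Δ(Δ−1). -/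
lemma stmt_9_aux (Δ R Q : ℕ) (hΔ : 2 < Δ) (hR : 3 < R) (hQ : Δ ^ 2 + R - 1 < Q)
    (a : ℕ → ℕ)
    (hpos : ∀ i, 1 ≤ i → i ≤ R → 1 ≤ a i)
    (h1 : a 1 ≤ Δ)
    (hchain : ∀ i, 2 ≤ i → i ≤ R → a i ≤ a (i - 1) * (Δ - 1))
    (hsum : (∑ i ∈ Finset.Icc 1 R, a i) = Q - 1)
    (k : ℕ) (hk : k = 1 ∨ k = 2)
    (hk1 : k = 1 → a 1 < Δ)
    (hk2 : k = 2 → a 2 + 1 ≤ a 1 * (Δ - 1)) :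
    ∃ b : ℕ → ℕ, ((∀ i, 1 ≤ i → i ≤ R → 1 ≤ b i) ∧ b 1 ≤ Δ ∧
        (∀ i, 2 ≤ i → i ≤ R → b i ≤ b (i - 1) * (Δ - 1)) ∧
        (∑ i ∈ Finset.Icc 1 R, b i) = Q - 1) ∧
      (∏ i ∈ Finset.Icc 3 R, (b i + 1)) < ∏ i ∈ Finset.Icc 3 R, (a i + 1) := by
  have hΔ2 : Δ * (Δ - 1) + Δ = Δ * Δ := by
    have h : Δ - 1 + 1 = Δ := by omega
    calc Δ * (Δ - 1) + Δ = Δ * ((Δ - 1) + 1) := by ring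
    _ = Δ * Δ := by rw [h]
  have hpow : Δ ^ 2 = Δ * Δ := by ring
  have ha2 : a 2 ≤ Δ * (Δ - 1) :=
    le_trans (hchain 2 le_rfl (by omega)) (Nat.mul_le_mul_right _ h1)
  -- split the sum over Icc 1 R
  have hsplit : Finset.Icc 1 R = insert 1 (insert 2 (Finset.Icc 3 R)) := by
    ext x
    simp only [Finset.mem_Icc, Finset.mem_insert]
    omega
  have h1n : (1:ℕ) ∉ insert 2 (Finset.Icc 3 R) := by
    simp only [Finset.mem_insert, Finset.mem_Icc]; omega
  have h2n : (2:ℕ) ∉ Finset.Icc 3 R := by simp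
  have hsum3 : ∀ f : ℕ → ℕ, (∑ i ∈ Finset.Icc 1 R, f i)
      = f 1 + (f 2 + ∑ i ∈ Finset.Icc 3 R, f i) := by
    intro f
    rw [hsplit, Finset.sum_insert h1n, Finset.sum_insert h2n]
  -- the set of tail indices with value ≥ 2 is nonempty
  set S : Finset ℕ := (Finset.Icc 3 R).filter (fun i => 2 ≤ a i) with hS
  have hSne : S.Nonempty := by
    by_contra hne
    have hall : ∀ i ∈ Finset.Icc 3 R, a i = 1 := by
      intro i hi
      rcases Finset.mem_Icc.mp hi with ⟨hi3, hiR⟩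
      have h1 := hpos i (by omega) hiR
      by_contra hne2
      exact hne ⟨i, Finset.mem_filter.mpr ⟨hi, by omega⟩⟩
    have htail : (∑ i ∈ Finset.Icc 3 R, a i) = R - 2 := by
      rw [Finset.sum_congr rfl hall]
      simp [Nat.card_Icc]
    have := hsum3 a
    rw [hsum, htail] at this
    omega
  set j := S.max' hSne with hj
  have hjmem : j ∈ S := S.max'_mem hSne
  have hjI : 3 ≤ j ∧ j ≤ R ∧ 2 ≤ a j := by
    rcases Finset.mem_filter.mp hjmem with ⟨hm, h2⟩
    rcases Finset.mem_Icc.mp hm with ⟨h3, h4⟩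
    exact ⟨h3, h4, h2⟩
  obtain ⟨hj3, hjR, haj⟩ := hjI
  have hjmax : ∀ i, 3 ≤ i → i ≤ R → 2 ≤ a i → i ≤ j := by
    intro i hi3 hiR h2
    exact S.le_max' i (Finset.mem_filter.mpr ⟨Finset.mem_Icc.mpr ⟨hi3, hiR⟩, h2⟩)
  have hjk : j ≠ k := by omega
  set b : ℕ → ℕ := fun i => if i = j then a j - 1 else if i = k then a k + 1 else a i with hb
  have hbj : b j = a j - 1 := by simp [hb]
  have hbk : b k = a k + 1 := by simp [hb, Ne.symm hjk]
  have hbo : ∀ i, i ≠ j → i ≠ k → b i = a i := by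
    intro i hij hik; simp [hb, hij, hik]
  have hbge : ∀ i, i ≠ j → a i ≤ b i := by
    intro i hij
    by_cases hik : i = k
    · subst hik; rw [hbk]; omega
    · rw [hbo i hij hik]
  refine ⟨b, ⟨?_, ?_, ?_, ?_⟩, ?_⟩
  · -- positivity
    intro i hi1 hiR
    by_cases hij : i = j
    · subst hij; rw [hbj]; omega
    · exact le_trans (hpos i hi1 hiR) (hbge i hij)
  · -- b 1 ≤ Δ
    rcases hk with hk | hk
    · subst hk
      rw [hbk]
      exact hk1 rfl
    · rw [hbo 1 (by omega) (by omega)]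
      exact h1
  · -- chain
    intro i hi2 hiR
    by_cases hij : i = j
    · rw [hij, hbj]
      calc a j - 1 ≤ a j := Nat.sub_le _ _
      _ ≤ a (j-1) * (Δ - 1) := hchain j (by omega) (by omega)
      _ ≤ b (j-1) * (Δ - 1) := Nat.mul_le_mul_right _ (hbge (j-1) (by omega))
    by_cases hik : i = k
    · have hk2' : k = 2 := by omega
      subst hik; subst hk2'
      rw [hbk]
      have : b 1 = a 1 := hbo 1 (by omega) (by omega)
      simp only [this]
      exact hk2 rfl
    by_cases hgt : j < i
    · have hai : a i = 1 := by
        have h1 := hpos i (by omega) hiR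
        by_contra hne2
        have := hjmax i (by omega) hiR (by omega)
        omega
      rw [hbo i hij hik, hai]
      have hb1 : 1 ≤ b (i-1) := by
        by_cases h : i - 1 = j
        · rw [h, hbj]; omega
        · exact le_trans (hpos (i-1) (by omega) (by omega)) (hbge (i-1) h)
      calc 1 = 1 * 1 := by ring
      _ ≤ b (i-1) * (Δ - 1) := Nat.mul_le_mul hb1 (by omega)
    · -- i < j
      have hlt : i < j := by omega
      rw [hbo i hij hik]
      calc a i ≤ a (i-1) * (Δ - 1) := hchain i hi2 hiR
      _ ≤ b (i-1) * (Δ - 1) := Nat.mul_le_mul_right _ (hbge (i-1) (by omega))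
  · -- sum
    have hjmem1 : j ∈ Finset.Icc 1 R := Finset.mem_Icc.mpr ⟨by omega, hjR⟩
    have hkmem1 : k ∈ (Finset.Icc 1 R).erase j := by
      rw [Finset.mem_erase]
      exact ⟨Ne.symm hjk, Finset.mem_Icc.mpr ⟨by omega, by omega⟩⟩
    have hrw : ∀ f : ℕ → ℕ, (∑ i ∈ Finset.Icc 1 R, f i)
        = f j + (f k + ∑ i ∈ ((Finset.Icc 1 R).erase j).erase k, f i) := by
      intro f
      rw [Finset.add_sum_erase _ f hkmem1, Finset.add_sum_erase _ f hjmem1]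
    have hcongr : (∑ i ∈ ((Finset.Icc 1 R).erase j).erase k, b i)
        = ∑ i ∈ ((Finset.Icc 1 R).erase j).erase k, a i := by
      apply Finset.sum_congr rfl
      intro x hx
      rw [Finset.mem_erase, Finset.mem_erase] at hx
      exact hbo x hx.2.1 hx.1
    have h1 := hrw b
    have h2 := hrw a
    rw [hcongr, hbj, hbk] at h1
    rw [h2] at hsum
    omega
  · -- product strictly smaller
    have hjmem3 : j ∈ Finset.Icc 3 R := Finset.mem_Icc.mpr ⟨hj3, hjR⟩
    have hcongr : (∏ i ∈ (Finset.Icc 3 R).erase j, (b i + 1))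
        = ∏ i ∈ (Finset.Icc 3 R).erase j, (a i + 1) := by
      apply Finset.prod_congr rfl
      intro x hx
      rw [Finset.mem_erase, Finset.mem_Icc] at hx
      rw [hbo x hx.1 (by omega)]
    rw [← Finset.mul_prod_erase _ _ hjmem3, ← Finset.mul_prod_erase _ (fun i => a i + 1) hjmem3,
      hcongr, hbj]
    have hprodpos : 0 < ∏ i ∈ (Finset.Icc 3 R).erase j, (a i + 1) :=
      Finset.prod_pos (fun i _ => Nat.succ_pos _)
    exact (Nat.mul_lt_mul_right hprodpos).mpr (by omega)

/-- Every minimizer of `∏_{i=3}^R (a_i + 1)` over positive integer tuples with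
`a_1 ≤ Δ`, `a_i ≤ a_{i-1}(Δ-1)` and `Σ a_i = Q - 1` satisfies `a_1 = Δ` and
`a_2 = Δ(Δ-1)`. -/
theorem stmt_9 (Δ R Q : ℕ) (hΔ : 2 < Δ) (hR : 3 < R) (hQ : Δ ^ 2 + R - 1 < Q)
    (C : (ℕ → ℕ) → Prop)
    (hC : ∀ a : ℕ → ℕ, C a ↔
      ((∀ i, 1 ≤ i → i ≤ R → 1 ≤ a i) ∧ a 1 ≤ Δ ∧
        (∀ i, 2 ≤ i → i ≤ R → a i ≤ a (i - 1) * (Δ - 1)) ∧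
        (∑ i ∈ Finset.Icc 1 R, a i) = Q - 1))
    (a : ℕ → ℕ) (ha : C a)
    (hmin : ∀ b : ℕ → ℕ, C b →
      (∏ i ∈ Finset.Icc 3 R, (a i + 1)) ≤ ∏ i ∈ Finset.Icc 3 R, (b i + 1)) :
    a 1 = Δ ∧ a 2 = Δ * (Δ - 1) := by
  rw [hC] at ha
  obtain ⟨hpos, h1, hchain, hsum⟩ := ha
  have key : ∀ k, (k = 1 ∨ k = 2) → (k = 1 → a 1 < Δ) → (k = 2 → a 2 + 1 ≤ a 1 * (Δ - 1)) →
      False := by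
    intro k hk hk1 hk2
    obtain ⟨b, hbC, hblt⟩ := stmt_9_aux Δ R Q hΔ hR hQ a hpos h1 hchain hsum k hk hk1 hk2
    have := hmin b ((hC b).mpr hbC)
    omega
  have ha1 : a 1 = Δ := by
    by_contra h
    exact key 1 (Or.inl rfl) (fun _ => by omega) (fun h2 => by omega)
  refine ⟨ha1, ?_⟩
  have ha2 : a 2 ≤ a 1 * (Δ - 1) := hchain 2 le_rfl (by omega)
  by_contra h
  refine key 2 (Or.inr rfl) (fun h1 => by omega) (fun _ => ?_)
  rw [ha1]
  rw [ha1] at ha2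
  omega
end

section
/- Let X be a connected locally finite graph with infinite motion, R ≥ 5 odd, Y ⊆ X a (2R+1)-separated, 2R-coarsely dense subset, and ψ the partial 2-coloring defined by ψ(x) = 0 if d(x,Y) ∈ {0,1}, ψ(x) = 1 if d(x,Y) = 2 or d(x,Y) ∈ {4,6,…,R−1} or d(x,Y) > R, and ψ undefined when d(x,Y) is odd and 3 ≤ d(x,Y) ≤ R. Then for every coloring φ: X → {0,1} extending ψ and every automorphism f of X preserving φ, f(Y) = Y. -/
/-!
Around every point of `Y` the colouring shows the pattern "`0` on the closed unit ball, `1` on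
the sphere of radius `2`" (`IsColorCenter`), and a `φ`-preserving automorphism carries it to the
image point. A centre of this pattern is within distance `1` of `Y`: at every even distance
`≥ 2` from `Y` the colour is `1` (this is where `R` odd enters), and a vertex at odd distance
`≥ 3` has a neighbour one step closer to `Y`. Two adjacent centres are closed twins, so swapping
them is an automorphism moving only two vertices, which infinite motion forbids.
-/

namespace SimpleGraph

variable {V V' : Type*} {G : SimpleGraph V} {G' : SimpleGraph V'}

theorem Iso.dist_map_le (f : G ≃g G') (u v : V) : G'.dist (f u) (f v) ≤ G.dist u v := by
  by_cases h : G.Reachable u v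
  · obtain ⟨p, hp⟩ := h.exists_walk_length_eq_dist
    calc G'.dist (f u) (f v) ≤ (p.map f.toHom).length := dist_le _
      _ = G.dist u v := by rw [Walk.length_map, hp]
  · rw [dist_eq_zero_of_not_reachable (Iso.reachable_iff.not.mpr h)]
    exact Nat.zero_le _

theorem Iso.dist_map (f : G ≃g G') (u v : V) : G'.dist (f u) (f v) = G.dist u v :=
  (f.dist_map_le u v).antisymm <| by simpa using f.symm.dist_map_le (f u) (f v)

def Iso.swap [DecidableEq V] {a b : V} (h : ∀ w, w ≠ a → w ≠ b → (G.Adj a w ↔ G.Adj b w)) :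
    G ≃g G where
  toEquiv := Equiv.swap a b
  map_rel_iff' {u v} := by
    simp only [Equiv.swap_apply_def]
    have hcomm := G.adj_comm
    have hirr : ∀ v, ¬G.Adj v v := fun _ ↦ G.irrefl
    split_ifs <;> grind

theorem eq_of_forall_adj_iff_of_infinite_motion
    (hmotion : ∀ f : G ≃g G, {v | f v ≠ v}.Finite → ∀ v, f v = v) {a b : V}
    (h : ∀ w, w ≠ a → w ≠ b → (G.Adj a w ↔ G.Adj b w)) : a = b := by
  classical
  have hfin : {v | Iso.swap h v ≠ v}.Finite :=
    (Set.toFinite {a, b}).subset fun v hv ↦ by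
      by_contra hab
      simp only [Set.mem_insert_iff, Set.mem_singleton_iff, not_or] at hab
      exact hv (Equiv.swap_apply_of_ne_of_ne hab.1 hab.2)
  simpa [Iso.swap] using (hmotion _ hfin a).symm

/-- Junk value `0` when `Y` is empty. -/
noncomputable def infDist (G : SimpleGraph V) (x : V) (Y : Set V) : ℕ :=
  sInf {n | ∃ y ∈ Y, G.dist x y = n}

section infDist

variable {Y : Set V} {x y : V}

theorem infDist_le_dist (hy : y ∈ Y) : G.infDist x Y ≤ G.dist x y :=
  Nat.sInf_le ⟨y, hy, rfl⟩

theorem exists_dist_eq_infDist (hY : Y.Nonempty) (x : V) : ∃ y ∈ Y, G.dist x y = G.infDist x Y :=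
  let ⟨y, hy⟩ := hY
  Nat.sInf_mem (s := {n | ∃ y ∈ Y, G.dist x y = n}) ⟨_, y, hy, rfl⟩

theorem Connected.infDist_le_dist_add (hconn : G.Connected) (hY : Y.Nonempty) (u v : V) :
    G.infDist u Y ≤ G.dist u v + G.infDist v Y := by
  obtain ⟨y, hy, hvy⟩ := G.exists_dist_eq_infDist hY v
  calc G.infDist u Y ≤ G.dist u y := infDist_le_dist hy
    _ ≤ G.dist u v + G.dist v y := hconn.dist_triangle
    _ = G.dist u v + G.infDist v Y := by rw [hvy]

theorem Connected.exists_adj_infDist_eq (hconn : G.Connected) (hY : Y.Nonempty)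
    (hx : 0 < G.infDist x Y) : ∃ u, G.Adj x u ∧ G.infDist u Y + 1 = G.infDist x Y := by
  obtain ⟨y, hy, hxy⟩ := G.exists_dist_eq_infDist hY x
  obtain ⟨p, hp⟩ := exists_walk_of_dist_ne_zero (hxy ▸ hx.ne')
  cases p with
  | nil => simp [← hxy] at hx
  | @cons _ u _ hxu p =>
    refine ⟨u, hxu, le_antisymm ?_ ?_⟩
    · have := (G.infDist_le_dist (x := u) hy).trans (dist_le p)
      simp only [Walk.length_cons] at hp
      omega
    · have := hconn.infDist_le_dist_add hY x u
      rw [dist_eq_one_iff_adj.mpr hxu] at this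
      omega

variable {R : ℕ}

theorem Connected.eq_of_dist_le_of_dist_le (hconn : G.Connected)
    (hsep : ∀ y ∈ Y, ∀ y' ∈ Y, y ≠ y' → 2 * R + 1 ≤ G.dist y y') {y' : V} (hy : y ∈ Y)
    (hy' : y' ∈ Y) (hxy : G.dist x y ≤ R) (hxy' : G.dist x y' ≤ R) : y = y' := by
  by_contra hne
  have := hsep y hy y' hy' hne
  have := hconn.dist_triangle (u := y) (v := x) (w := y')
  rw [dist_comm] at hxy
  omega

theorem Connected.infDist_eq_dist (hconn : G.Connected)
    (hsep : ∀ y ∈ Y, ∀ y' ∈ Y, y ≠ y' → 2 * R + 1 ≤ G.dist y y') (hy : y ∈ Y)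
    (hxy : G.dist x y ≤ R) : G.infDist x Y = G.dist x y := by
  obtain ⟨y', hy', hxy'⟩ := G.exists_dist_eq_infDist ⟨y, hy⟩ x
  have := G.infDist_le_dist (x := x) hy
  rw [← hconn.eq_of_dist_le_of_dist_le hsep hy hy' hxy (by omega)] at hxy'
  exact hxy'.symm

end infDist

def IsColorCenter (G : SimpleGraph V) (φ : V → Fin 2) (v : V) : Prop :=
  ∀ w, (G.dist v w ≤ 1 → φ w = 0) ∧ (G.dist v w = 2 → φ w = 1)

section IsColorCenter

variable {φ : V → Fin 2} {a b : V}

theorem IsColorCenter.map (f : G ≃g G) (hf : ∀ v, φ (f v) = φ v) (ha : G.IsColorCenter φ a) :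
    G.IsColorCenter φ (f a) := by
  intro w
  obtain ⟨w, rfl⟩ := f.surjective w
  simpa only [f.dist_map, hf] using ha w

theorem Connected.adj_of_isColorCenter (hconn : G.Connected) (ha : G.IsColorCenter φ a)
    (hb : G.IsColorCenter φ b) (hab : G.Adj a b) {w : V} (haw : G.Adj a w) (hwb : w ≠ b) :
    G.Adj b w := by
  have hw : φ w = 0 := (ha w).1 (dist_eq_one_iff_adj.mpr haw).le
  have hbw : G.dist b w ≤ 2 :=
    calc G.dist b w ≤ G.dist b a + G.dist a w := hconn.dist_triangle
      _ = 2 := by rw [dist_eq_one_iff_adj.mpr hab.symm, dist_eq_one_iff_adj.mpr haw]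
  have hbw₂ : G.dist b w ≠ 2 := fun h ↦ by simpa [hw] using (hb w).2 h
  have hbw₀ : G.dist b w ≠ 0 := hconn.pos_dist_of_ne hwb.symm |>.ne'
  exact dist_eq_one_iff_adj.mp (by omega)

theorem Connected.not_adj_of_isColorCenter (hconn : G.Connected)
    (hmotion : ∀ f : G ≃g G, {v | f v ≠ v}.Finite → ∀ v, f v = v)
    (ha : G.IsColorCenter φ a) (hb : G.IsColorCenter φ b) : ¬G.Adj a b := fun hab ↦
  hab.ne <| eq_of_forall_adj_iff_of_infinite_motion hmotion fun _ hwa hwb ↦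
    ⟨(hconn.adj_of_isColorCenter ha hb hab · hwb),
      (hconn.adj_of_isColorCenter hb ha hab.symm · hwa)⟩

end IsColorCenter

section Separated

variable {Y : Set V} {R : ℕ} {φ : V → Fin 2} {x y : V}

theorem Connected.isColorCenter_of_mem (hconn : G.Connected)
    (hsep : ∀ y ∈ Y, ∀ y' ∈ Y, y ≠ y' → 2 * R + 1 ≤ G.dist y y') (hR : 2 ≤ R)
    (h0 : ∀ x, G.infDist x Y ≤ 1 → φ x = 0) (h2 : ∀ x, G.infDist x Y = 2 → φ x = 1)
    (hy : y ∈ Y) : G.IsColorCenter φ y := by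
  intro w
  have hw : G.dist y w ≤ 2 → G.infDist w Y = G.dist y w := fun h ↦
    (hconn.infDist_eq_dist hsep hy (by rw [dist_comm]; omega)).trans dist_comm
  exact ⟨fun h ↦ h0 w (by rw [hw (by omega)]; exact h), fun h ↦ h2 w (by rw [hw h.le, h])⟩

theorem Connected.infDist_le_one_of_isColorCenter (hconn : G.Connected) (hY : Y.Nonempty)
    (heven : ∀ x, Even (G.infDist x Y) → 2 ≤ G.infDist x Y → φ x = 1)
    (hx : G.IsColorCenter φ x) : G.infDist x Y ≤ 1 := by
  by_contra! hx2
  have : ∃ w, G.dist x w ≤ 1 ∧ φ w = 1 := by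
    rcases Nat.even_or_odd (G.infDist x Y) with hxeven | ⟨k, hk⟩
    · exact ⟨x, by simp, heven x hxeven hx2⟩
    · obtain ⟨u, hxu, hu⟩ := hconn.exists_adj_infDist_eq (x := x) hY (by omega)
      exact ⟨u, (dist_eq_one_iff_adj.mpr hxu).le, heven u ⟨k, by omega⟩ (by omega)⟩
  obtain ⟨w, hxw, hw⟩ := this
  simp [(hx w).1 hxw] at hw

theorem Connected.mem_of_isColorCenter (hconn : G.Connected)
    (hmotion : ∀ f : G ≃g G, {v | f v ≠ v}.Finite → ∀ v, f v = v)
    (hsep : ∀ y ∈ Y, ∀ y' ∈ Y, y ≠ y' → 2 * R + 1 ≤ G.dist y y') (hR : 2 ≤ R) (hY : Y.Nonempty)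
    (h0 : ∀ x, G.infDist x Y ≤ 1 → φ x = 0) (h2 : ∀ x, G.infDist x Y = 2 → φ x = 1)
    (heven : ∀ x, Even (G.infDist x Y) → 2 ≤ G.infDist x Y → φ x = 1)
    (hx : G.IsColorCenter φ x) : x ∈ Y := by
  obtain ⟨y, hy, hxy⟩ := G.exists_dist_eq_infDist hY x
  have hxy₁ : G.dist x y ≤ 1 := hxy ▸ hconn.infDist_le_one_of_isColorCenter hY heven hx
  have hxy₀ : G.dist x y ≠ 1 := mt dist_eq_one_iff_adj.mp <|
    hconn.not_adj_of_isColorCenter hmotion hx (hconn.isColorCenter_of_mem hsep hR h0 h2 hy)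
  rwa [hconn.dist_eq_zero_iff.mp (by omega : G.dist x y = 0)]

end Separated

end SimpleGraph

open SimpleGraph in
theorem stmt_13_general {V : Type*} (G : SimpleGraph V) (hconn : G.Connected)
    (hmotion : ∀ f : G ≃g G, {v : V | f v ≠ v}.Finite → ∀ v, f v = v)
    (R : ℕ) (hR : 5 ≤ R) (hodd : Odd R) (Y : Set V)
    (hsep : ∀ y ∈ Y, ∀ y' ∈ Y, y ≠ y' → 2 * R + 1 ≤ G.dist y y')
    (hdense : ∀ x : V, ∃ y ∈ Y, G.dist x y ≤ 2 * R)
    (dY : V → ℕ) (hdY : ∀ x : V, dY x = sInf {n : ℕ | ∃ y ∈ Y, G.dist x y = n})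
    (φ : V → Fin 2)
    (h0 : ∀ x : V, dY x ≤ 1 → φ x = 0)
    (h2 : ∀ x : V, dY x = 2 → φ x = 1)
    (hA : ∀ x : V, Even (dY x) → 4 ≤ dY x → dY x ≤ R - 1 → φ x = 1)
    (hout : ∀ x : V, R < dY x → φ x = 1) :
    ∀ f : G ≃g G, (∀ v : V, φ (f v) = φ v) → (⇑f) '' Y = Y := by
  obtain rfl : dY = (G.infDist · Y) := funext hdY
  beta_reduce at h0 h2 hA hout
  have hY : Y.Nonempty :=
    let ⟨y, hy, _⟩ := hdense hconn.nonempty.some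
    ⟨y, hy⟩
  have heven : ∀ x, Even (G.infDist x Y) → 2 ≤ G.infDist x Y → φ x = 1 := by
    intro x ⟨k, hk⟩ hx
    obtain ⟨m, rfl⟩ := hodd
    by_cases hx2 : G.infDist x Y = 2
    · exact h2 x hx2
    by_cases hxR : G.infDist x Y ≤ 2 * m
    · exact hA x ⟨k, hk⟩ (by omega) (by omega)
    · exact hout x (by omega)
  have hmaps : ∀ g : G ≃g G, (∀ v, φ (g v) = φ v) → ∀ y ∈ Y, g y ∈ Y := fun g hg y hy ↦
    hconn.mem_of_isColorCenter hmotion hsep (by omega) hY h0 h2 heven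
      ((hconn.isColorCenter_of_mem hsep (by omega) h0 h2 hy).map g hg)
  intro f hf
  have hf_symm : ∀ v, φ (f.symm v) = φ v := fun v ↦ by
    simpa using (hf (f.symm v)).symm
  exact (Set.image_subset_iff.mpr (hmaps f hf)).antisymm fun y hy ↦
    ⟨f.symm y, hmaps f.symm hf_symm y hy, f.apply_symm_apply y⟩

/-- Let `X` be connected, locally finite, with infinite motion, `R ≥ 5` odd, `Y` a
`(2R+1)`-separated `2R`-coarsely dense subset, and `φ` a 2-coloring extending the
partial coloring `ψ` (color 0 at distance 0,1 from `Y`; color 1 at distance 2, at even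
distances `4 ≤ d ≤ R-1`, and at distance `> R`).  Then every `φ`-preserving
automorphism maps `Y` onto `Y`. -/
theorem stmt_13 {V : Type*} (G : SimpleGraph V) (hconn : G.Connected)
    (hlf : G.LocallyFinite)
    (hmotion : ∀ f : G ≃g G, {v : V | f v ≠ v}.Finite → ∀ v, f v = v)
    (R : ℕ) (hR : 5 ≤ R) (hodd : Odd R) (Y : Set V)
    (hsep : ∀ y ∈ Y, ∀ y' ∈ Y, y ≠ y' → 2 * R + 1 ≤ G.dist y y')
    (hdense : ∀ x : V, ∃ y ∈ Y, G.dist x y ≤ 2 * R)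
    (dY : V → ℕ) (hdY : ∀ x : V, dY x = sInf {n : ℕ | ∃ y ∈ Y, G.dist x y = n})
    (φ : V → Fin 2)
    (h0 : ∀ x : V, dY x ≤ 1 → φ x = 0)
    (h2 : ∀ x : V, dY x = 2 → φ x = 1)
    (hA : ∀ x : V, Even (dY x) → 4 ≤ dY x → dY x ≤ R - 1 → φ x = 1)
    (hout : ∀ x : V, R < dY x → φ x = 1) :
    ∀ f : G ≃g G, (∀ v : V, φ (f v) = φ v) → (⇑f) '' Y = Y :=
  stmt_13_general G hconn hmotion R hR hodd Y hsep hdense dY hdY φ h0 h2 hA hout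
end
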